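/- Let T > 0, d, m ∈ ℕ, let σ : ℝ^d → ℝ^{d×m} be twice continuously differentiable (entries σ^i_μ), and let Z : [0,T] → ℝ^m be continuously differentiable with derivative ż. For (s,t) ∈ Δ_T define ℤ^{μν}_{st} := ∫_s^t ż^μ(r) (Z^ν(r) − Z^ν(s)) dr, the antisymmetric Lévy area 𝔸^{μν}_{st} := ½ (ℤ^{μν}_{st} − ℤ^{νμ}_{st}), and the coefficients X^i_{st}(x) := Σ_μ σ^i_μ(x)(Z^μ(t) − Z^μ(s)), 𝕃^i_{st}(x) := Σ_{μ,ν,j} ℤ^{μν}_{st} ∂_j σ^i_μ(x) σ^j_ν(x). For f : ℝ^d → ℝ twice continuously differentiable set B¹_{st} f := Σ_i X^i_{st} ∂_i f, B²_{st} f := ½ Σ_{i,j} X^i_{st} X^j_{st} ∂_{ij} f + Σ_i 𝕃^i_{st} ∂_i f, and σ̂_μ g := Σ_j σ^j_μ ∂_j g. Then for every such f and every (s,t) ∈ Δ_T, pointwise on ℝ^d: B²_{st} f − ½ B¹_{st}(B¹_{st} f) = ½ Σ_{μ,ν} 𝔸^{μν}_{st} ( σ̂_ν(σ̂_μ f) −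 σ̂_μ(σ̂_ν f) ). -/

import Mathlib

/-- The `i`-th partial derivative of `f : ℝ^d → ℝ` at `x`. -/
noncomputable def partialD (d : ℕ) (f : (Fin d → ℝ) → ℝ) (i : Fin d)
    (x : Fin d → ℝ) : ℝ :=
  fderiv ℝ f x (Pi.single i 1)

/-- The iterated integral `ℤ^{μν}_{st} = ∫_s^t ż^μ(r) (Z^ν(r) − Z^ν(s)) dr`. -/
noncomputable def iterZ (m : ℕ) (Z zdot : ℝ → Fin m → ℝ) (s t : ℝ)
    (μ ν : Fin m) : ℝ :=
  ∫ r in s..t, zdot r μ * (Z r ν - Z s ν)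

/-- The antisymmetric Lévy area `𝔸^{μν}_{st} = ½ (ℤ^{μν}_{st} − ℤ^{νμ}_{st})`. -/
noncomputable def levyArea (m : ℕ) (Z zdot : ℝ → Fin m → ℝ) (s t : ℝ)
    (μ ν : Fin m) : ℝ :=
  (1 / 2) * (iterZ m Z zdot s t μ ν - iterZ m Z zdot s t ν μ)

/-- The coefficient `X^i_{st}(x) = Σ_μ σ^i_μ(x)(Z^μ(t) − Z^μ(s))`. -/
noncomputable def Xcoeff (d m : ℕ) (σ : (Fin d → ℝ) → Fin d → Fin m → ℝ)
    (Z : ℝ → Fin m → ℝ) (s t : ℝ) (x : Fin d → ℝ) (i : Fin d) : ℝ :=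
  ∑ μ : Fin m, σ x i μ * (Z t μ - Z s μ)

/-- The coefficient `𝕃^i_{st}(x) = Σ_{μ,ν,j} ℤ^{μν}_{st} ∂_j σ^i_μ(x) σ^j_ν(x)`. -/
noncomputable def Lcoeff (d m : ℕ) (σ : (Fin d → ℝ) → Fin d → Fin m → ℝ)
    (Z zdot : ℝ → Fin m → ℝ) (s t : ℝ) (x : Fin d → ℝ) (i : Fin d) : ℝ :=
  ∑ μ : Fin m, ∑ ν : Fin m, ∑ j : Fin d,
    iterZ m Z zdot s t μ ν * partialD d (fun y => σ y i μ) j x * σ x j ν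

/-- The first-order operator `B¹_{st} f = Σ_i X^i_{st} ∂_i f`. -/
noncomputable def opB1 (d m : ℕ) (σ : (Fin d → ℝ) → Fin d → Fin m → ℝ)
    (Z : ℝ → Fin m → ℝ) (s t : ℝ) (f : (Fin d → ℝ) → ℝ) (x : Fin d → ℝ) : ℝ :=
  ∑ i : Fin d, Xcoeff d m σ Z s t x i * partialD d f i x

/-- The second-order operator
`B²_{st} f = ½ Σ_{i,j} X^i_{st} X^j_{st} ∂_{ij} f + Σ_i 𝕃^i_{st} ∂_i f`. -/
noncomputable def opB2 (d m : ℕ) (σ : (Fin d → ℝ) → Fin d → Fin m → ℝ)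
    (Z zdot : ℝ → Fin m → ℝ) (s t : ℝ) (f : (Fin d → ℝ) → ℝ) (x : Fin d → ℝ) : ℝ :=
  (1 / 2) * ∑ i : Fin d, ∑ j : Fin d,
      Xcoeff d m σ Z s t x i * Xcoeff d m σ Z s t x j *
        partialD d (fun y => partialD d f j y) i x
    + ∑ i : Fin d, Lcoeff d m σ Z zdot s t x i * partialD d f i x

/-- The vector field `σ̂_μ g = Σ_j σ^j_μ ∂_j g`. -/
noncomputable def sigmaHat (d m : ℕ) (σ : (Fin d → ℝ) → Fin d → Fin m → ℝ)
    (μ : Fin m) (g : (Fin d → ℝ) → ℝ) (x : Fin d → ℝ) : ℝ :=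
  ∑ j : Fin d, σ x j μ * partialD d g j x

section Aux

/-!
Write `δ^μ = Z^μ_t − Z^μ_s`, so that `B¹ = Σ_μ δ^μ σ̂_μ`. By the Leibniz rule,
`σ̂_ν (σ̂_μ f) = (∇_{σ_ν} σ_μ) f + D²f(σ_ν, σ_μ)`; the Hessian terms of `B² f` and `½ B¹ B¹ f`
cancel, and those of the commutator cancel by Schwarz's theorem. What remains is first order,
and the integration by parts `δ^μ δ^ν = ℤ^{μν} + ℤ^{νμ}` turns the leftover coefficients of
`(∇_{σ_ν} σ_μ) f` into the antisymmetric part of `ℤ`, the Lévy area.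
-/

lemma Finset.sum_sum_sum_sum_comm {α β γ δ M : Type*} [Fintype α] [Fintype β] [Fintype γ]
    [Fintype δ] [AddCommMonoid M] (F : α → β → γ → δ → M) :
    ∑ a, ∑ b, ∑ c, ∑ e, F a b c e = ∑ c, ∑ e, ∑ a, ∑ b, F a b c e := by
  calc ∑ a, ∑ b, ∑ c, ∑ e, F a b c e = ∑ a, ∑ c, ∑ b, ∑ e, F a b c e :=
        Finset.sum_congr rfl fun a _ => Finset.sum_comm
    _ = ∑ c, ∑ a, ∑ e, ∑ b, F a b c e := by
        rw [Finset.sum_comm]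
        exact Finset.sum_congr rfl fun c _ => Finset.sum_congr rfl fun a _ => Finset.sum_comm
    _ = ∑ c, ∑ e, ∑ a, ∑ b, F a b c e := Finset.sum_congr rfl fun c _ => Finset.sum_comm

lemma Finset.sum_sum_eq_zero_of_antisymm {ι K : Type*} [Fintype ι] [Field K] [CharZero K]
    (G : ι → ι → K) (hG : ∀ i j, G j i = -G i j) : ∑ i, ∑ j, G i j = 0 := by
  refine CharZero.eq_neg_self_iff.mp ?_
  calc ∑ i, ∑ j, G i j = ∑ i, ∑ j, G j i := Finset.sum_comm
    _ = -∑ i, ∑ j, G i j := by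
        simp only [← Finset.sum_neg_distrib]
        exact Finset.sum_congr rfl fun i _ => Finset.sum_congr rfl fun j _ => hG i j

lemma sum_sum_mul_sub_half_sum_sum_add_swap_mul {ι K : Type*} [Fintype ι] [Field K]
    [CharZero K] (A P : ι → ι → K) :
    ∑ i, ∑ j, A i j * P i j - (1 / 2) * ∑ i, ∑ j, (A i j + A j i) * P j i
      = (1 / 2) * ∑ i, ∑ j, (1 / 2) * (A i j - A j i) * (P i j - P j i) := by
  rw [← sub_eq_zero]
  simp only [Finset.mul_sum, ← Finset.sum_sub_distrib]
  exact Finset.sum_sum_eq_zero_of_antisymm _ fun i j => by ring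

section PartialDerivatives

variable {d : ℕ} {f : (Fin d → ℝ) → ℝ} {x : Fin d → ℝ}

lemma partialD_fun_mul {g h : (Fin d → ℝ) → ℝ} (hg : DifferentiableAt ℝ g x)
    (hh : DifferentiableAt ℝ h x) (i : Fin d) :
    partialD d (fun y => g y * h y) i x = partialD d g i x * h x + g x * partialD d h i x := by
  simp only [partialD, fderiv_fun_mul hg hh, add_apply, smul_apply, smul_eq_mul]
  ring

lemma partialD_fun_sum {ι : Type*} (s : Finset ι) {g : ι → (Fin d → ℝ) → ℝ}
    (hg : ∀ k ∈ s, DifferentiableAt ℝ (g k) x) (i : Fin d) :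
    partialD d (fun y => ∑ k ∈ s, g k y) i x = ∑ k ∈ s, partialD d (g k) i x := by
  simp only [partialD, fderiv_fun_sum hg, FunLike.coe_sum, Finset.sum_apply]

lemma partialD_const_mul {g : (Fin d → ℝ) → ℝ} (hg : DifferentiableAt ℝ g x) (c : ℝ)
    (i : Fin d) : partialD d (fun y => c * g y) i x = c * partialD d g i x := by
  simp only [partialD, fderiv_const_mul hg, smul_apply, smul_eq_mul]

lemma differentiableAt_partialD (hf : ContDiffAt ℝ 2 f x) (j : Fin d) :
    DifferentiableAt ℝ (partialD d f j) x :=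
  ((hf.fderiv_right (m := 1) (by norm_num)).differentiableAt one_ne_zero).clm_apply
    (differentiableAt_const _)

lemma partialD_partialD_comm (hf : ContDiffAt ℝ 2 f x) (i j : Fin d) :
    partialD d (partialD d f j) i x = partialD d (partialD d f i) j x := by
  have hD : DifferentiableAt ℝ (fderiv ℝ f) x :=
    (hf.fderiv_right (m := 1) (by norm_num)).differentiableAt one_ne_zero
  have hsecond : ∀ k l : Fin d, partialD d (partialD d f l) k x
      = fderiv ℝ (fderiv ℝ f) x (Pi.single k 1) (Pi.single l 1) := fun k l => by
    change fderiv ℝ (fun y => fderiv ℝ f y (Pi.single l 1)) x (Pi.single k 1) = _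
    rw [fderiv_clm_apply hD (differentiableAt_const _)]
    simp
  rw [hsecond, hsecond]
  exact hf.isSymmSndFDerivAt (by simp) _ _

end PartialDerivatives

noncomputable def hessianForm (d : ℕ) (f : (Fin d → ℝ) → ℝ) (x v w : Fin d → ℝ) : ℝ :=
  ∑ i : Fin d, ∑ j : Fin d, v i * w j * partialD d (partialD d f j) i x

section HessianForm

variable {d : ℕ} {f : (Fin d → ℝ) → ℝ} {x : Fin d → ℝ}

lemma hessianForm_comm (hf : ContDiffAt ℝ 2 f x) (v w : Fin d → ℝ) :
    hessianForm d f x v w = hessianForm d f x w v := by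
  rw [hessianForm, Finset.sum_comm]
  refine Finset.sum_congr rfl fun i _ => Finset.sum_congr rfl fun j _ => ?_
  rw [partialD_partialD_comm hf]
  ring

lemma hessianForm_mulVec_mulVec {m : ℕ} (A B : Matrix (Fin d) (Fin m) ℝ) (a b : Fin m → ℝ) :
    hessianForm d f x (A.mulVec a) (B.mulVec b)
      = ∑ μ : Fin m, ∑ ν : Fin m, a μ * b ν * hessianForm d f x (A · μ) (B · ν) := by
  simp only [hessianForm, Matrix.mulVec, dotProduct, Finset.sum_mul, Finset.mul_sum]
  rw [Finset.sum_sum_sum_sum_comm, Finset.sum_comm]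
  refine Finset.sum_congr rfl fun μ _ => Finset.sum_congr rfl fun ν _ =>
    Finset.sum_congr rfl fun i _ => Finset.sum_congr rfl fun j _ => by ring

end HessianForm

/-- `(∇_{σ_ν} σ_μ) f` for the flat connection of `ℝ^d`. -/
noncomputable def covDerivApply (d m : ℕ) (σ : (Fin d → ℝ) → Fin d → Fin m → ℝ)
    (f : (Fin d → ℝ) → ℝ) (x : Fin d → ℝ) (μ ν : Fin m) : ℝ :=
  ∑ j : Fin d, sigmaHat d m σ ν (fun y => σ y j μ) x * partialD d f j x

section VectorFields

variable {d m : ℕ} {σ : (Fin d → ℝ) → Fin d → Fin m → ℝ} {f : (Fin d → ℝ) → ℝ}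
  {x : Fin d → ℝ}

lemma differentiableAt_sigma_apply (hσ : DifferentiableAt ℝ σ x) (j : Fin d) (μ : Fin m) :
    DifferentiableAt ℝ (fun y => σ y j μ) x :=
  differentiableAt_pi.mp (differentiableAt_pi.mp hσ j) μ

lemma differentiableAt_sigmaHat (hσ : DifferentiableAt ℝ σ x) (hf : ContDiffAt ℝ 2 f x)
    (μ : Fin m) : DifferentiableAt ℝ (sigmaHat d m σ μ f) x :=
  DifferentiableAt.fun_sum fun j _ =>
    (differentiableAt_sigma_apply hσ j μ).fun_mul (differentiableAt_partialD hf j)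

lemma sigmaHat_fun_sum_const_mul {g : Fin m → (Fin d → ℝ) → ℝ}
    (hg : ∀ ν, DifferentiableAt ℝ (g ν) x) (c : Fin m → ℝ) (μ : Fin m) :
    sigmaHat d m σ μ (fun y => ∑ ν : Fin m, c ν * g ν y) x
      = ∑ ν : Fin m, c ν * sigmaHat d m σ μ (g ν) x := by
  simp only [sigmaHat, partialD_fun_sum _ fun ν _ => (hg ν).const_mul (c ν),
    partialD_const_mul (hg _), Finset.mul_sum]
  rw [Finset.sum_comm]
  exact Finset.sum_congr rfl fun ν _ => Finset.sum_congr rfl fun j _ => by ring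

lemma sigmaHat_sigmaHat (hσ : DifferentiableAt ℝ σ x) (hf : ContDiffAt ℝ 2 f x) (μ ν : Fin m) :
    sigmaHat d m σ ν (sigmaHat d m σ μ f) x
      = covDerivApply d m σ f x μ ν + hessianForm d f x (σ x · ν) (σ x · μ) := by
  have hσ' := differentiableAt_sigma_apply hσ
  have hf' := differentiableAt_partialD hf
  have hinner : ∀ k, partialD d (sigmaHat d m σ μ f) k x = ∑ j : Fin d,
      (partialD d (fun y => σ y j μ) k x * partialD d f j x
        + σ x j μ * partialD d (partialD d f j) k x) := fun k => by
    change partialD d (fun y => ∑ j : Fin d, σ y j μ * partialD d f j y) k x = _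
    rw [partialD_fun_sum _ fun j _ => (hσ' j μ).fun_mul (hf' j)]
    exact Finset.sum_congr rfl fun j _ => partialD_fun_mul (hσ' j μ) (hf' j) k
  simp only [sigmaHat, hinner, covDerivApply, hessianForm, mul_add, Finset.sum_add_distrib,
    Finset.mul_sum, Finset.sum_mul]
  congr 1
  · rw [Finset.sum_comm]
    exact Finset.sum_congr rfl fun j _ => Finset.sum_congr rfl fun k _ => by ring
  · exact Finset.sum_congr rfl fun k _ => Finset.sum_congr rfl fun j _ => by ring

lemma sigmaHat_sigmaHat_sub_sigmaHat_sigmaHat (hσ : DifferentiableAt ℝ σ x)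
    (hf : ContDiffAt ℝ 2 f x) (μ ν : Fin m) :
    sigmaHat d m σ ν (sigmaHat d m σ μ f) x - sigmaHat d m σ μ (sigmaHat d m σ ν f) x
      = covDerivApply d m σ f x μ ν - covDerivApply d m σ f x ν μ := by
  rw [sigmaHat_sigmaHat hσ hf, sigmaHat_sigmaHat hσ hf, hessianForm_comm hf]
  ring

end VectorFields

lemma iterZ_add_iterZ_swap {m : ℕ} {Z zdot : ℝ → Fin m → ℝ}
    (hZ : ∀ (μ : Fin m) (r : ℝ), HasDerivAt (fun u => Z u μ) (zdot r μ) r)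
    (hzdot : ∀ μ : Fin m, Continuous fun r => zdot r μ) (s t : ℝ) (μ ν : Fin m) :
    iterZ m Z zdot s t μ ν + iterZ m Z zdot s t ν μ = (Z t μ - Z s μ) * (Z t ν - Z s ν) := by
  have hZc : ∀ μ, Continuous fun u => Z u μ := fun μ =>
    continuous_iff_continuousAt.mpr fun r => (hZ μ r).continuousAt
  have hint : ∀ μ ν,
      IntervalIntegrable (fun r => zdot r μ * (Z r ν - Z s ν)) MeasureTheory.volume s t :=
    fun μ ν => ((hzdot μ).mul ((hZc ν).sub continuous_const)).intervalIntegrable s t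
  have hderiv : ∀ r, HasDerivAt (fun u => (Z u μ - Z s μ) * (Z u ν - Z s ν))
      (zdot r μ * (Z r ν - Z s ν) + zdot r ν * (Z r μ - Z s μ)) r := fun r =>
    (((hZ μ r).sub_const _).fun_mul ((hZ ν r).sub_const _)).congr_deriv (by ring)
  rw [iterZ, iterZ, ← intervalIntegral.integral_add (hint μ ν) (hint ν μ),
    intervalIntegral.integral_eq_sub_of_hasDerivAt (fun r _ => hderiv r)
      ((hint μ ν).add (hint ν μ))]
  ring

section Operators

variable {d m : ℕ} {σ : (Fin d → ℝ) → Fin d → Fin m → ℝ} {Z zdot : ℝ → Fin m → ℝ} {s t : ℝ}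
  {f : (Fin d → ℝ) → ℝ} {x : Fin d → ℝ}

lemma opB1_eq_sum_sigmaHat (g : (Fin d → ℝ) → ℝ) (y : Fin d → ℝ) :
    opB1 d m σ Z s t g y = ∑ μ : Fin m, (Z t μ - Z s μ) * sigmaHat d m σ μ g y := by
  simp only [opB1, Xcoeff, sigmaHat, Finset.sum_mul, Finset.mul_sum]
  rw [Finset.sum_comm]
  exact Finset.sum_congr rfl fun μ _ => Finset.sum_congr rfl fun i _ => by ring

lemma opB1_opB1_eq_sum (hσ : DifferentiableAt ℝ σ x) (hf : ContDiffAt ℝ 2 f x) :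
    opB1 d m σ Z s t (fun y => opB1 d m σ Z s t f y) x
      = ∑ μ : Fin m, ∑ ν : Fin m, (Z t μ - Z s μ) * (Z t ν - Z s ν)
          * sigmaHat d m σ μ (sigmaHat d m σ ν f) x := by
  simp only [opB1_eq_sum_sigmaHat,
    sigmaHat_fun_sum_const_mul (differentiableAt_sigmaHat hσ hf), Finset.mul_sum, mul_assoc]

lemma sum_Lcoeff_mul_partialD :
    ∑ i : Fin d, Lcoeff d m σ Z zdot s t x i * partialD d f i x
      = ∑ μ : Fin m, ∑ ν : Fin m, iterZ m Z zdot s t μ ν * covDerivApply d m σ f x μ ν := by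
  simp only [Lcoeff, covDerivApply, sigmaHat, Finset.sum_mul, Finset.mul_sum]
  rw [Finset.sum_comm]
  refine Finset.sum_congr rfl fun μ _ => ?_
  rw [Finset.sum_comm]
  exact Finset.sum_congr rfl fun ν _ => Finset.sum_congr rfl fun i _ =>
    Finset.sum_congr rfl fun j _ => by ring

lemma opB2_eq_sum :
    opB2 d m σ Z zdot s t f x
      = (1 / 2) * ∑ μ : Fin m, ∑ ν : Fin m, (Z t μ - Z s μ) * (Z t ν - Z s ν)
          * hessianForm d f x (σ x · μ) (σ x · ν)
        + ∑ μ : Fin m, ∑ ν : Fin m, iterZ m Z zdot s t μ ν * covDerivApply d m σ f x μ ν := by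
  rw [opB2, sum_Lcoeff_mul_partialD]
  congr 2
  exact hessianForm_mulVec_mulVec (σ x) (σ x) _ _

end Operators

theorem bracket_eq_levyArea_lieBracket_general (T : ℝ) (d m : ℕ)
    (σ : (Fin d → ℝ) → Fin d → Fin m → ℝ) (hσ : ContDiff ℝ 2 fun x => σ x)
    (Z zdot : ℝ → Fin m → ℝ)
    (hZ : ∀ (μ : Fin m) (r : ℝ), HasDerivAt (fun u => Z u μ) (zdot r μ) r)
    (hzdot : ∀ μ : Fin m, Continuous fun r => zdot r μ) :
    ∀ f : (Fin d → ℝ) → ℝ, ContDiff ℝ 2 f →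
      ∀ s t : ℝ, 0 ≤ s → s ≤ t → t ≤ T → ∀ x : Fin d → ℝ,
        opB2 d m σ Z zdot s t f x
            - (1 / 2) * opB1 d m σ Z s t (fun y => opB1 d m σ Z s t f y) x
          = (1 / 2) * ∑ μ : Fin m, ∑ ν : Fin m,
              levyArea m Z zdot s t μ ν *
                (sigmaHat d m σ ν (sigmaHat d m σ μ f) x
                  - sigmaHat d m σ μ (sigmaHat d m σ ν f) x) := by
  intro f hf s t _ _ _ x
  have hσx : DifferentiableAt ℝ σ x := hσ.differentiable (by norm_num) x
  have hfx : ContDiffAt ℝ 2 f x := hf.contDiffAt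
  simp only [sigmaHat_sigmaHat_sub_sigmaHat_sigmaHat hσx hfx, levyArea]
  rw [opB2_eq_sum, opB1_opB1_eq_sum hσx hfx]
  simp only [sigmaHat_sigmaHat hσx hfx, mul_add, Finset.sum_add_distrib,
    ← iterZ_add_iterZ_swap hZ hzdot]
  rw [← sum_sum_mul_sub_half_sum_sum_add_swap_mul]
  ring

/-- **The bracket of the canonical lift in terms of the Lévy area.** For `σ` of class
`C²` and `Z` of class `C¹`, the bracket `B²_{st} f − ½ B¹_{st}(B¹_{st} f)` equals
`½ Σ_{μ,ν} 𝔸^{μν}_{st} (σ̂_ν σ̂_μ − σ̂_μ σ̂_ν) f` for every `C²` function `f`. -/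
theorem bracket_eq_levyArea_lieBracket (T : ℝ) (hT : 0 < T) (d m : ℕ)
    (σ : (Fin d → ℝ) → Fin d → Fin m → ℝ) (hσ : ContDiff ℝ 2 fun x => σ x)
    (Z zdot : ℝ → Fin m → ℝ)
    (hZ : ∀ (μ : Fin m) (r : ℝ), HasDerivAt (fun u => Z u μ) (zdot r μ) r)
    (hzdot : ∀ μ : Fin m, Continuous fun r => zdot r μ) :
    ∀ f : (Fin d → ℝ) → ℝ, ContDiff ℝ 2 f →
      ∀ s t : ℝ, 0 ≤ s → s ≤ t → t ≤ T → ∀ x : Fin d → ℝ,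
        opB2 d m σ Z zdot s t f x
            - (1 / 2) * opB1 d m σ Z s t (fun y => opB1 d m σ Z s t f y) x
          = (1 / 2) * ∑ μ : Fin m, ∑ ν : Fin m,
              levyArea m Z zdot s t μ ν *
                (sigmaHat d m σ ν (sigmaHat d m σ μ f) x
                  - sigmaHat d m σ μ (sigmaHat d m σ ν f) x) :=
  bracket_eq_levyArea_lieBracket_general T d m σ hσ Z zdot hZ hzdot
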